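/- If a language L has a finite SSF and w is a word, then the languages wL = {wu : u ∈ L} and Lw = {uw : u ∈ L} have finite SSFs. -/

import Mathlib

/-- `npow w n` is the word `w` repeated `n` times. -/
def npow {α : Type*} (w : List α) : ℕ → List α
  | 0 => []
  | n + 1 => w ++ npow w n

/-- `occ w x` is the number of occurrences of `x` as a factor of `w`,
i.e. the number of factorizations `w = s ++ x ++ t`. -/
def occ {α : Type*} [DecidableEq α] (w x : List α) : ℕ :=
  ((List.range (w.length + 1)).filter (fun i => x <+: w.drop i)).length

/-- A nonempty word is primitive if it is not a power of a shorter word. -/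
def Primitive {α : Type*} (p : List α) : Prop :=
  p ≠ [] ∧ ∀ (q : List α) (n : ℕ), p = npow q n → q = p

/-- `u` and `v` are `k`-abelian equivalent. -/
def KAbEq {α : Type*} [DecidableEq α] (k : ℕ) (u v : List α) : Prop :=
  ∀ x : List α, x.length ≤ k → occ u x = occ v x

section Aux
variable {α : Type*} [DecidableEq α]

lemma occ_cons (c : α) (u x : List α) :
    occ (c :: u) x = occ u x + (if x <+: (c :: u) then 1 else 0) := by
  simp only [occ, List.length_cons]
  rw [List.range_succ_eq_map]
  simp only [List.filter_cons, List.filter_map, List.length_map, List.drop_zero]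
  have : ((fun i => decide (x <+: (c :: u).drop i)) ∘ Nat.succ)
      = fun i => decide (x <+: u.drop i) := by
    funext i; simp
  rw [this]
  by_cases h : x <+: c :: u <;> simp [h, Nat.add_comm]

lemma occ_sum [Fintype α] (u x : List α) :
    occ u x = (∑ a : α, occ u (a :: x)) + (if x <+: u then 1 else 0) := by
  induction u with
  | nil =>
      have h0 : ∀ y : List α, occ ([] : List α) y = if y = [] then 1 else 0 := by
        intro y
        simp only [occ, List.length_nil, List.drop_nil, List.prefix_nil]
        by_cases h : y = [] <;> simp [h, List.range_succ]
      simp [h0, List.prefix_nil]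
  | cons c u ih =>
      rw [occ_cons, ih]
      have hsum : ∀ a : α, occ (c :: u) (a :: x)
          = occ u (a :: x) + (if a = c ∧ x <+: u then 1 else 0) := by
        intro a
        rw [occ_cons]
        congr 1
        simp [List.cons_prefix_cons]
      simp only [hsum, Finset.sum_add_distrib]
      have : (∑ a : α, if a = c ∧ x <+: u then 1 else 0)
          = (if x <+: u then 1 else 0) := by
        by_cases h : x <+: u <;> simp [h]
      omega

lemma kabeq_cancel_cons [Fintype α] {k : ℕ} {a : α} {u v : List α}
    (h : KAbEq (k + 1) (a :: u) (a :: v)) : KAbEq k u v := by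
  intro x hx
  have h1 := occ_sum (a :: u) x
  have h2 := occ_sum (a :: v) x
  have hx1 : occ (a :: u) x = occ (a :: v) x := h x (le_trans hx (Nat.le_succ k))
  have hsum : (∑ b : α, occ (a :: u) (b :: x)) = ∑ b : α, occ (a :: v) (b :: x) :=
    Finset.sum_congr rfl (fun b _ => h (b :: x) (by simpa using hx))
  have hu := occ_cons a u x
  have hv := occ_cons a v x
  set p := (if x <+: a :: u then (1:ℕ) else 0) with hp
  set q := (if x <+: a :: v then (1:ℕ) else 0) with hq
  omega

lemma kabeq_cancel_append [Fintype α] {k : ℕ} (w : List α) {u v : List α}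
    (h : KAbEq (k + w.length) (w ++ u) (w ++ v)) : KAbEq k u v := by
  induction w with
  | nil => simpa using h
  | cons a w ih =>
      apply ih
      apply kabeq_cancel_cons (a := a)
      have : k + (a :: w).length = (k + w.length) + 1 := by simp; omega
      rw [this] at h
      simpa using h

lemma occ_eq_card (u x : List α) :
    occ u x = ((Finset.range (u.length + 1)).filter (fun i => x <+: u.drop i)).card := rfl

lemma rev_occ_aux {u x : List α} {i : ℕ} (hi : i ≤ u.length) (h : x <+: u.drop i) :
    x.reverse <+: u.reverse.drop (u.length - x.length - i) := by
  obtain ⟨t, ht⟩ := h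
  have hu : u = u.take i ++ (x ++ t) := by
    rw [ht]; exact (List.take_append_drop i u).symm
  have hlen : t.length = u.length - x.length - i := by
    have h2 := congrArg List.length hu
    simp [List.length_take] at h2
    omega
  have hrev : u.reverse = t.reverse ++ (x.reverse ++ (u.take i).reverse) := by
    conv_lhs => rw [hu]
    simp [List.reverse_append, List.append_assoc]
  rw [hrev, ← hlen, ← List.length_reverse (as := t), List.drop_left]
  exact List.prefix_append _ _

lemma occ_reverse (u x : List α) : occ u.reverse x.reverse = occ u x := by
  rw [occ_eq_card, occ_eq_card]
  refine (Finset.card_nbij' (i := fun i => u.length - x.length - i)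
    (j := fun j => u.length - x.length - j) ?_ ?_ ?_ ?_).symm
  · intro i hi
    simp only [Finset.mem_coe, Finset.mem_filter, Finset.mem_range, Nat.lt_succ_iff] at hi ⊢
    refine ⟨by simp; omega, ?_⟩
    have := rev_occ_aux hi.1 hi.2
    simpa [List.length_reverse] using this
  · intro j hj
    simp only [Finset.mem_coe, Finset.mem_filter, Finset.mem_range, Nat.lt_succ_iff,
      List.length_reverse] at hj ⊢
    refine ⟨by omega, ?_⟩
    have := rev_occ_aux (u := u.reverse) (x := x.reverse) (by simpa using hj.1) hj.2
    simpa using this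
  · intro i hi
    simp only [Finset.mem_coe, Finset.mem_filter, Finset.mem_range, Nat.lt_succ_iff] at hi
    have hlen : x.length ≤ u.length - i := by
      have := hi.2.length_le
      simpa using this
    show u.length - x.length - (u.length - x.length - i) = i
    omega
  · intro j hj
    simp only [Finset.mem_coe, Finset.mem_filter, Finset.mem_range, Nat.lt_succ_iff,
      List.length_reverse] at hj
    have hlen : x.length ≤ u.length - j := by
      have := hj.2.length_le
      simpa using this
    show u.length - x.length - (u.length - x.length - j) = j
    omega

lemma kabeq_reverse {k : ℕ} {u v : List α} (h : KAbEq k u v) :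
    KAbEq k u.reverse v.reverse := by
  intro x hx
  have h1 : occ u.reverse x = occ u x.reverse := by
    rw [← occ_reverse u x.reverse, List.reverse_reverse]
  have h2 : occ v.reverse x = occ v x.reverse := by
    rw [← occ_reverse v x.reverse, List.reverse_reverse]
  rw [h1, h2]
  exact h x.reverse (by simpa using hx)

end Aux

/-- `X` is a separating set of factors of `L`. -/
def IsSSF {α : Type*} [DecidableEq α] (X L : Set (List α)) : Prop :=
  ∀ u ∈ L, ∀ v ∈ L, u ≠ v → ∃ x ∈ X, occ u x ≠ occ v x

/-- `L` has a finite separating set of factors. -/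
def HasFiniteSSF {α : Type*} [DecidableEq α] (L : Set (List α)) : Prop :=
  ∃ X : Set (List α), X.Finite ∧ IsSSF X L

/-- If `L` has a finite SSF and `w` is a word, then `wL` and `Lw` have finite
SSFs. -/
theorem stmt11 {α : Type*} [DecidableEq α] [Fintype α] (L : Set (List α))
    (w : List α) (hL : HasFiniteSSF L) :
    HasFiniteSSF ((fun u => w ++ u) '' L) ∧ HasFiniteSSF ((fun u => u ++ w) '' L) := by
  obtain ⟨X, hXfin, hX⟩ := hL
  set K := hXfin.toFinset.sup List.length with hK
  have hKb : ∀ x ∈ X, x.length ≤ K := fun x hx =>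
    Finset.le_sup (f := List.length) (hXfin.mem_toFinset.mpr hx)
  set Y : Set (List α) := {y | y.length ≤ K + w.length} with hY
  have hYfin : Y.Finite := List.finite_length_le α (K + w.length)
  have hsep : ∀ u ∈ L, ∀ v ∈ L, u ≠ v → ¬ KAbEq K u v := by
    intro u hu v hv hne hk
    obtain ⟨x, hxX, hxne⟩ := hX u hu v hv hne
    exact hxne (hk x (hKb x hxX))
  constructor
  · refine ⟨Y, hYfin, ?_⟩
    rintro _ ⟨u, hu, rfl⟩ _ ⟨v, hv, rfl⟩ hne
    by_contra hcon
    push_neg at hcon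
    have hk : KAbEq (K + w.length) (w ++ u) (w ++ v) := fun x hx => hcon x hx
    have huv : u ≠ v := fun h => hne (by rw [h])
    exact hsep u hu v hv huv (kabeq_cancel_append w hk)
  · refine ⟨Y, hYfin, ?_⟩
    rintro _ ⟨u, hu, rfl⟩ _ ⟨v, hv, rfl⟩ hne
    by_contra hcon
    push_neg at hcon
    have hk : KAbEq (K + w.length) (u ++ w) (v ++ w) := fun x hx => hcon x hx
    have hk2 : KAbEq (K + w.reverse.length) (w.reverse ++ u.reverse)
        (w.reverse ++ v.reverse) := by
      have := kabeq_reverse hk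
      simpa [List.reverse_append, List.length_reverse] using this
    have hk3 := kabeq_cancel_append w.reverse hk2
    have hk4 : KAbEq K u v := by
      have := kabeq_reverse hk3
      simpa using this
    have huv : u ≠ v := fun h => hne (by rw [h])
    exact hsep u hu v hv huv hk4
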